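/- arXiv:2007.06652 — 2 statements merged into one kernel-verified Lean document; each statement's English description precedes it below -/
import Mathlib

section
/- A Young diagram has a removable border strip of length t if and only if it has a box of hook length t. Equivalently, for any partition λ and positive integer t, λ has a hook of length divisible by t if and only if one can remove a border strip of length t from λ. -/
open scoped BigOperators

/-- The `i`-th largest part of `μ` (0-indexed), i.e. the length of row `i` of its Young diagram. -/
def rowLen {n : ℕ} (μ : Nat.Partition n) (i : ℕ) : ℕ :=
  ((μ.parts.sort (· ≤ ·)).reverse).getD i 0

/-- The length of column `j` (0-indexed) of the Young diagram of `μ`. -/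
def colLen {n : ℕ} (μ : Nat.Partition n) (j : ℕ) : ℕ :=
  (μ.parts.filter (fun a => j < a)).card

/-- The hook length of the box `(i,j)` (0-indexed) of the Young diagram of `μ`. -/
def hookLen {n : ℕ} (μ : Nat.Partition n) (i j : ℕ) : ℕ :=
  (rowLen μ i - j) + (colLen μ j - i) - 1

/-- `λ` has a removable border strip of length `t`: there is a smaller Young diagram `g`
contained in `λ` (given by its row lengths) such that the skew shape `λ/g` has `t` boxes,
its nonempty rows form a consecutive interval `[a,b]`, and consecutive nonempty rows overlap
in exactly one column (equivalently, the skew shape is connected and contains no `2×2`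
square). -/
def HasBorderStrip {n : ℕ} (lam : Nat.Partition n) (t : ℕ) : Prop :=
  ∃ g : ℕ → ℕ,
    (∀ i, g (i + 1) ≤ g i) ∧
    (∀ i, g i ≤ rowLen lam i) ∧
    (∑ i ∈ Finset.range (n + 1), (rowLen lam i - g i)) = t ∧
    ∃ a b : ℕ, a ≤ b ∧
      (∀ i, g i < rowLen lam i ↔ a ≤ i ∧ i ≤ b) ∧
      (∀ i, a ≤ i → i < b → g i = rowLen lam (i + 1) - 1)

/-!
Label row `i` of `λ` by its β-number `λᵢ + n - i` and column `j` by `j + n + 1 - λ'ⱼ`. These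
labels split ℕ into beads and empty spots (James' abacus), and the hook length of the box `(i, j)`
is the difference of the labels of its row and its column. So a hook of length `m` is a bead that
can slide `m` steps down into an empty spot. If a bead `x` can slide down to `x - kt`, the first
empty spot among `x, x - t, …, x - kt` exhibits a bead sliding by exactly `t`, i.e. a hook of
length `t`. Finally, the rim of the hook of `(i, j)` is a border strip of the same length, and
every border strip is the rim of the hook of the box in its top row and its leftmost column.
-/

theorem List.lt_getD_iff_lt_length_filter {l : List ℕ} (hl : l.Pairwise (· ≥ ·)) (i j : ℕ) :
    j < l.getD i 0 ↔ i < (l.filter (j < ·)).length := by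
  induction l generalizing i with
  | nil => simp
  | cons x xs ih =>
    obtain ⟨hx, hxs⟩ := List.pairwise_cons.1 hl
    by_cases hjx : j < x
    · cases i
      · simp [hjx]
      · rw [List.getD_cons_succ, ih hxs]
        simp [hjx]
    · have hnil : xs.filter (j < ·) = [] :=
        List.filter_eq_nil_iff.2 fun a ha h => hjx ((decide_eq_true_iff.1 h).trans_le (hx a ha))
      cases i
      · simp [hjx, hnil]
      · rw [List.getD_cons_succ, ih hxs]
        simp [hjx, hnil]

section Conjugate

variable {n : ℕ} (μ : Nat.Partition n)

theorem lt_rowLen_iff_lt_colLen (i j : ℕ) : j < rowLen μ i ↔ i < colLen μ j := by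
  have hsorted := List.pairwise_reverse.2 (μ.parts.pairwise_sort (· ≤ ·))
  rw [rowLen, List.lt_getD_iff_lt_length_filter hsorted, colLen, List.filter_reverse,
    List.length_reverse, ← Multiset.coe_card, ← Multiset.filter_coe, Multiset.sort_eq]

theorem rowLen_antitone : Antitone (rowLen μ) :=
  antitone_nat_of_succ_le fun i => not_lt.1 fun h => by
    have := (lt_rowLen_iff_lt_colLen μ _ _).1 h
    exact lt_irrefl _ ((lt_rowLen_iff_lt_colLen μ i _).2 (by omega))

theorem colLen_le (j : ℕ) : colLen μ j ≤ n :=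
  calc colLen μ j ≤ Multiset.card μ.parts := Multiset.card_le_card (Multiset.filter_le _ _)
    _ = Multiset.card μ.parts • 1 := (smul_eq_mul ..).trans (mul_one _) |>.symm
    _ ≤ μ.parts.sum := Multiset.card_nsmul_le_sum fun _ h => μ.parts_pos h
    _ = n := μ.parts_sum

end Conjugate

theorem sum_Icc_tsub_add_of_rim {r g : ℕ → ℕ} {a b : ℕ} (hab : a ≤ b)
    (hrim : ∀ k, a ≤ k → k < b →
      g k = r (k + 1) - 1 ∧ 0 < r (k + 1) ∧ r (k + 1) ≤ r k)
    (hb : g b ≤ r b) :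
    ∑ k ∈ Finset.Icc a b, (r k - g k) + g b = r a + (b - a) := by
  induction b, hab using Nat.le_induction with
  | base => simp [hb]
  | succ b hab ih =>
    obtain ⟨hgb, hpos, hle⟩ := hrim b hab b.lt_succ_self
    have := ih (fun k hk hkb => hrim k hk (by omega)) (by omega)
    rw [Finset.sum_Icc_succ_top (by omega)]
    omega

section BorderStrip

variable {n : ℕ} (μ : Nat.Partition n)

theorem sum_rowLen_tsub_eq_hookLen {g : ℕ → ℕ} {a b : ℕ} (hab : a ≤ b)
    (hout : ∀ k, k < a ∨ b < k → g k = rowLen μ k)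
    (hmid : ∀ k, a ≤ k → k < b → g k = rowLen μ (k + 1) - 1)
    (hcol : colLen μ (g b) = b + 1) :
    ∑ k ∈ Finset.range (n + 1), (rowLen μ k - g k) = hookLen μ a (g b) := by
  have hlt : ∀ k ≤ b, g b < rowLen μ k := fun k hk =>
    (lt_rowLen_iff_lt_colLen μ k _).2 (by omega)
  have hbn := colLen_le μ (g b)
  rw [← Finset.sum_subset (s₁ := Finset.Icc a b)
    (fun k hk => by rw [Finset.mem_Icc] at hk; rw [Finset.mem_range]; omega)
    (fun k _ hk => by rw [Finset.mem_Icc] at hk; rw [hout k (by omega), Nat.sub_self])]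
  have := sum_Icc_tsub_add_of_rim hab
    (fun k hk hkb => ⟨hmid k hk hkb, (hlt (k + 1) hkb).trans_le' (Nat.zero_le _),
      rowLen_antitone μ k.le_succ⟩) (hlt b le_rfl).le
  have := hlt a hab
  unfold hookLen
  omega

theorem hasBorderStrip_hookLen {i j : ℕ} (hj : j < rowLen μ i) :
    HasBorderStrip μ (hookLen μ i j) := by
  set c := colLen μ j
  have hrow : ∀ k, j < rowLen μ k ↔ k < c := fun k => lt_rowLen_iff_lt_colLen μ k j
  have hic : i < c := (hrow i).1 hj
  have hanti : ∀ k, rowLen μ (k + 1) ≤ rowLen μ k := fun k => rowLen_antitone μ k.le_succ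
  -- the rim hook of `(i, j)`: row `k ∈ [i, c)` keeps `max j (rowLen μ (k + 1) - 1)` boxes
  let g k := if i ≤ k ∧ k < c then max j (rowLen μ (k + 1) - 1) else rowLen μ k
  have hgb : g (c - 1) = j := by
    have := (hrow (c - 1 + 1)).not.2 (by omega)
    simp only [g]; split_ifs <;> omega
  have hsum := sum_rowLen_tsub_eq_hookLen μ (g := g) (a := i) (b := c - 1) (by omega)
    (fun k hk => by simp only [g]; split_ifs <;> omega)
    (fun k hk hkb => by have := (hrow (k + 1)).2 (by omega); simp only [g]; split_ifs <;> omega)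
    (by rw [hgb]; omega)
  rw [hgb] at hsum
  refine ⟨g, fun k => ?_, fun k => ?_, hsum, i, c - 1, by omega, fun k => ?_,
    fun k hk hkb => ?_⟩ <;>
  · have := hrow k; have := hrow (k + 1); have := hanti k; have := hanti (k + 1)
    simp only [g]; split_ifs <;> omega

theorem exists_hookLen_eq_of_hasBorderStrip {t : ℕ} (h : HasBorderStrip μ t) :
    ∃ i j, j < rowLen μ i ∧ hookLen μ i j = t := by
  obtain ⟨g, hg, hgle, rfl, a, b, hab, hiff, hmid⟩ := h
  have hout : ∀ k, k < a ∨ b < k → g k = rowLen μ k := fun k hk => by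
    have := hiff k; have := hgle k; omega
  have hgb : g b < rowLen μ b := (hiff b).2 ⟨hab, le_rfl⟩
  have hcol : colLen μ (g b) = b + 1 := by
    have := (lt_rowLen_iff_lt_colLen μ b (g b)).1 hgb
    have := (lt_rowLen_iff_lt_colLen μ (b + 1) (g b)).not.1
      (by rw [← hout (b + 1) (by omega)]; exact (hg b).not_gt)
    omega
  exact ⟨a, g b, (antitone_nat_of_succ_le hg hab).trans_lt ((hiff a).2 ⟨le_rfl, hab⟩),
    (sum_rowLen_tsub_eq_hookLen μ hab hout hmid hcol).symm⟩

end BorderStrip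

section Abacus

variable {n : ℕ} (μ : Nat.Partition n)

/-- Positions on James' abacus: row `i` of `μ` is a bead at `beta μ i` (for `i > n` this
repeats `beta μ n = 0`) and column `j` is an empty spot at `gap μ j`. -/
def beta (i : ℕ) : ℕ := rowLen μ i + (n - i)

def gap (j : ℕ) : ℕ := j + (n + 1) - colLen μ j

theorem gap_lt_beta_iff (i j : ℕ) : gap μ j < beta μ i ↔ j < rowLen μ i := by
  have := lt_rowLen_iff_lt_colLen μ i j
  have := colLen_le μ j
  unfold beta gap
  omega

theorem hookLen_eq_beta_sub_gap {i j : ℕ} (hj : j < rowLen μ i) :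
    hookLen μ i j = beta μ i - gap μ j := by
  have := (lt_rowLen_iff_lt_colLen μ i j).1 hj
  have := colLen_le μ j
  unfold hookLen beta gap
  omega

theorem isCompl_range_beta_range_gap : IsCompl (Set.range (beta μ)) (Set.range (gap μ)) := by
  refine ⟨Set.disjoint_left.2 ?_, codisjoint_iff.2 (Set.eq_univ_of_forall fun y => ?_)⟩
  · rintro _ ⟨i, rfl⟩ ⟨j, hj⟩
    have := lt_rowLen_iff_lt_colLen μ i j
    have := colLen_le μ j
    unfold beta gap at hj
    omega
  · by_contra hy
    replace hy : y ∉ Set.range (beta μ) ∧ y ∉ Set.range (gap μ) := not_or.1 hy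
    have hex : ∃ j, y ≤ gap μ j := ⟨y, by have := colLen_le μ y; unfold gap; omega⟩
    set j := Nat.find hex
    have hyj : y < gap μ j := (Nat.find_spec hex).lt_of_ne fun h => hy.2 ⟨j, h.symm⟩
    have hprev : j = 0 ∨ gap μ (j - 1) < y := by
      rcases Nat.eq_zero_or_pos j with h | h
      · exact .inl h
      · exact .inr (not_le.1 (Nat.find_min hex (by omega)))
    -- `y` would be the bead of row `j + n - y`, which has length exactly `j`
    refine hy.1 ⟨j + n - y, ?_⟩
    have := lt_rowLen_iff_lt_colLen μ (j + n - y) j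
    have := lt_rowLen_iff_lt_colLen μ (j + n - y) (j - 1)
    have := colLen_le μ j
    have := colLen_le μ (j - 1)
    unfold beta
    unfold gap at hyj hprev
    omega

theorem exists_hookLen_eq_iff (m : ℕ) :
    (∃ i j, j < rowLen μ i ∧ hookLen μ i j = m) ↔
      ∃ x ∈ Set.range (beta μ), m ≤ x ∧ x - m ∉ Set.range (beta μ) := by
  have hcompl := isCompl_range_beta_range_gap μ
  constructor
  · rintro ⟨i, j, hj, rfl⟩
    have hlt := (gap_lt_beta_iff μ i j).2 hj
    refine ⟨beta μ i, ⟨i, rfl⟩, hookLen_eq_beta_sub_gap μ hj ▸ Nat.sub_le _ _, ?_⟩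
    rw [hookLen_eq_beta_sub_gap μ hj, Nat.sub_sub_self hlt.le]
    exact Set.disjoint_right.1 hcompl.disjoint ⟨j, rfl⟩
  · rintro ⟨_, ⟨i, rfl⟩, hm, hfree⟩
    obtain ⟨j, hj⟩ : beta μ i - m ∈ Set.range (gap μ) := hcompl.compl_eq ▸ hfree
    have hm0 : m ≠ 0 := by
      rintro rfl
      exact Set.disjoint_left.1 hcompl.disjoint ⟨i, rfl⟩ ⟨j, hj⟩
    have hij := (gap_lt_beta_iff μ i j).1 (by omega)
    exact ⟨i, j, hij, by rw [hookLen_eq_beta_sub_gap μ hij]; omega⟩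

end Abacus

theorem exists_mem_tsub_notMem_of_mul_le {S : Set ℕ} {t k x : ℕ} (hx : x ∈ S)
    (hk : t * k ≤ x) (hkx : x - t * k ∉ S) : ∃ y ∈ S, t ≤ y ∧ y - t ∉ S := by
  induction k generalizing x with
  | zero => exact absurd hx hkx
  | succ k ih =>
    rw [mul_add_one] at hk hkx
    by_cases h : x - t ∈ S
    · exact ih h (by omega) (by rwa [Nat.sub_sub, add_comm])
    · exact ⟨x, hx, by omega, h⟩

theorem borderStrip_iff_hook_general (n t : ℕ) (lam : Nat.Partition n) :
    ((∃ i j, j < rowLen lam i ∧ hookLen lam i j = t) ↔ HasBorderStrip lam t) ∧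
    ((∃ i j, j < rowLen lam i ∧ t ∣ hookLen lam i j) ↔ HasBorderStrip lam t) := by
  have hook_iff : (∃ i j, j < rowLen lam i ∧ hookLen lam i j = t) ↔ HasBorderStrip lam t :=
    ⟨fun ⟨_, _, hj, h⟩ => h ▸ hasBorderStrip_hookLen lam hj,
      exists_hookLen_eq_of_hasBorderStrip lam⟩
  refine ⟨hook_iff, fun ⟨i, j, hj, k, hk⟩ => ?_, fun h => ?_⟩
  · obtain ⟨x, hx, hkx, hfree⟩ := (exists_hookLen_eq_iff lam _).1 ⟨i, j, hj, hk⟩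
    exact hook_iff.1 ((exists_hookLen_eq_iff lam t).2
      (exists_mem_tsub_notMem_of_mul_le hx hkx hfree))
  · obtain ⟨i, j, hj, rfl⟩ := hook_iff.2 h
    exact ⟨i, j, hj, dvd_rfl⟩

/-- A Young diagram has a removable border strip of length `t` iff it has a box of hook
length `t`; equivalently, it has a hook length divisible by `t` iff a border strip of
length `t` can be removed. -/
theorem borderStrip_iff_hook (n t : ℕ) (ht : 0 < t) (lam : Nat.Partition n) :
    ((∃ i j, j < rowLen lam i ∧ hookLen lam i j = t) ↔ HasBorderStrip lam t) ∧
    ((∃ i j, j < rowLen lam i ∧ t ∣ hookLen lam i j) ↔ HasBorderStrip lam t) :=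
  borderStrip_iff_hook_general n t lam
end

section
/- Let p be a prime, μ a partition of n, and μ̃ the partition obtained from μ by repeatedly merging p equal parts of size m into one part of size pm until no part occurs p or more times. Then for every partition λ of n, χ^λ_μ ≡ χ^λ_{μ̃} (mod p). In particular, if χ^λ_{μ̃} = 0 then p divides χ^λ_μ. -/
open scoped BigOperators

/-- Irreducible character of `S_n` via the Frobenius character formula. -/
noncomputable def charSn (n : ℕ) (lam mu : Nat.Partition n) : ℤ :=
  MvPolynomial.coeff
    (Finsupp.equivFunOnFinite.symm fun i : Fin n =>
      ((lam.parts.sort (· ≤ ·)).reverse.getD i 0) + (n - 1 - (i : ℕ)))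
    ((∏ i : Fin n, ∏ j ∈ Finset.univ.filter (fun j : Fin n => (i : ℕ) < (j : ℕ)),
        (MvPolynomial.X i - MvPolynomial.X j)) *
      (mu.parts.map (fun m => ∑ i : Fin n, MvPolynomial.X i ^ m)).prod)

def MergeStep (p : ℕ) (s t : Multiset ℕ) : Prop :=
  ∃ m : ℕ, 0 < m ∧ Multiset.replicate p m ≤ s ∧
    t = (s - Multiset.replicate p m) + {p * m}

def Reduced (p : ℕ) (s : Multiset ℕ) : Prop := ∀ m : ℕ, s.count m ≤ p - 1

/-!
Reducing the Frobenius formula mod `p`, the character values become coefficients of the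
product of power sums `p_μ` over `𝔽_p`. There the Frobenius endomorphism gives
`p_m ^ p = p_{pm}`, so merging `p` parts equal to `m` into one part `pm` does not change
`p_μ` mod `p`.
-/

namespace MvPolynomial

variable {σ R : Type*}

theorem coeff_modEq_of_map_eq {p : ℕ} {P Q : MvPolynomial σ ℤ}
    (h : map (Int.castRingHom (ZMod p)) P = map (Int.castRingHom (ZMod p)) Q) (d : σ →₀ ℕ) :
    coeff d P ≡ coeff d Q [ZMOD p] := by
  rw [← ZMod.intCast_eq_intCast_iff]
  simpa only [coeff_map, eq_intCast] using congrArg (coeff d) h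

variable [Fintype σ] [CommSemiring R]

theorem psum_pow_char (p : ℕ) [Fact p.Prime] [CharP R p] (m : ℕ) :
    psum σ R m ^ p = psum σ R (p * m) := by
  simp only [psum, sum_pow_char, ← pow_mul, Nat.mul_comm m]

theorem map_psum {S : Type*} [CommSemiring S] (f : R →+* S) (m : ℕ) :
    map f (psum σ R m) = psum σ S m := by
  simp [psum]

end MvPolynomial

section Merge

variable {M : Type*} [CommMonoid M] {p : ℕ} {f : ℕ → M}

theorem MergeStep.prod_map_eq (hf : ∀ m, f m ^ p = f (p * m)) {s t : Multiset ℕ}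
    (h : MergeStep p s t) : (s.map f).prod = (t.map f).prod := by
  obtain ⟨m, -, hle, rfl⟩ := h
  conv_lhs => rw [← tsub_add_cancel_of_le hle]
  simp only [Multiset.map_add, Multiset.prod_add, Multiset.map_replicate,
    Multiset.prod_replicate, Multiset.map_singleton, Multiset.prod_singleton, hf]

theorem prod_map_eq_of_reflTransGen_mergeStep (hf : ∀ m, f m ^ p = f (p * m))
    {s t : Multiset ℕ} (h : Relation.ReflTransGen (MergeStep p) s t) :
    (s.map f).prod = (t.map f).prod := by
  induction h with
  | refl => rfl
  | tail _ hstep ih => exact ih.trans (hstep.prod_map_eq hf)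

end Merge

open MvPolynomial in
theorem charSn_modEq_of_map_psumPart_eq {p n : ℕ} (lam : Nat.Partition n)
    {μ ν : Nat.Partition n}
    (h : map (Int.castRingHom (ZMod p)) (psumPart (Fin n) ℤ μ) =
      map (Int.castRingHom (ZMod p)) (psumPart (Fin n) ℤ ν)) :
    charSn n lam μ ≡ charSn n lam ν [ZMOD p] :=
  coeff_modEq_of_map_eq (by simp only [map_mul]; exact congrArg (_ * ·) h) _

open MvPolynomial in
theorem char_modEq_reduction_general (p n : ℕ) (hp : p.Prime) (μ ν : Nat.Partition n)
    (hreach : Relation.ReflTransGen (MergeStep p) μ.parts ν.parts) :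
    ∀ lam : Nat.Partition n,
      charSn n lam μ ≡ charSn n lam ν [ZMOD p] ∧
      (charSn n lam ν = 0 → (p : ℤ) ∣ charSn n lam μ) := by
  have := Fact.mk hp
  intro lam
  have hpsum : map (Int.castRingHom (ZMod p)) (psumPart (Fin n) ℤ μ) =
      map (Int.castRingHom (ZMod p)) (psumPart (Fin n) ℤ ν) := by
    simp only [psumPart, map_multiset_prod, Multiset.map_map, Function.comp_def, map_psum]
    exact prod_map_eq_of_reflTransGen_mergeStep (psum_pow_char p) hreach
  have hmod := charSn_modEq_of_map_psumPart_eq lam hpsum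
  exact ⟨hmod, fun h0 => Int.modEq_zero_iff_dvd.mp (h0 ▸ hmod)⟩

/-- If `μ̃` is obtained from `μ` by repeatedly merging `p` equal parts until no part occurs
`p` or more times, then `χ^λ_μ ≡ χ^λ_{μ̃} (mod p)` for every `λ`; in particular, if
`χ^λ_{μ̃} = 0` then `p ∣ χ^λ_μ`. -/
theorem char_modEq_reduction (p n : ℕ) (hp : p.Prime) (μ ν : Nat.Partition n)
    (hreach : Relation.ReflTransGen (MergeStep p) μ.parts ν.parts)
    (hred : Reduced p ν.parts) :
    ∀ lam : Nat.Partition n,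
      charSn n lam μ ≡ charSn n lam ν [ZMOD p] ∧
      (charSn n lam ν = 0 → (p : ℤ) ∣ charSn n lam μ) :=
  char_modEq_reduction_general p n hp μ ν hreach
end
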